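/- Let v : ℤ → ℝ be a function with liminf_{x→±∞} v(x) = -∞ and limsup_{x→±∞} v(x) = +∞, and let h > 0. Then between any two left h-minima y₁ < y₂ of v there exists a left h-maximum of v; consequently left h-minima and left h-maxima of v alternate. -/
import Mathlib


/-- `y` is a left `h`-minimum of `v : ℤ → ℝ`. -/
def IsLeftHMin (v : ℤ → ℝ) (h : ℝ) (y : ℤ) : Prop :=
  ∃ α β : ℤ, α < y ∧ y < β ∧
    (∀ k, α ≤ k → k < y → v y < v k) ∧
    (∀ k, y < k → k ≤ β → v y ≤ v k) ∧
    v y + h ≤ v α ∧ v y + h ≤ v β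

/-- `y` is a left `h`-maximum of `v : ℤ → ℝ`. -/
def IsLeftHMax (v : ℤ → ℝ) (h : ℝ) (y : ℤ) : Prop :=
  IsLeftHMin (fun t => -v t) h y

lemma leftHMin_key (v : ℤ → ℝ) (h : ℝ) (hh : 0 < h) (y₁ y₂ : ℤ)
    (h1 : IsLeftHMin v h y₁) (h2 : IsLeftHMin v h y₂) (hlt : y₁ < y₂) :
    ∃ x : ℤ, y₁ < x ∧ x < y₂ ∧ IsLeftHMax v h x := by
  classical
  obtain ⟨α₁, β₁, hα₁, hβ₁, hL1, hR1, hvα₁, hvβ₁⟩ := h1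
  obtain ⟨α₂, β₂, hα₂, hβ₂, hL2, hR2, hvα₂, hvβ₂⟩ := h2
  set S := Finset.Icc y₁ y₂ with hS
  have hSne : S.Nonempty := ⟨y₁, by simp [hS, Finset.mem_Icc]; omega⟩
  obtain ⟨m, hmS, hm⟩ := S.exists_max_image v hSne
  set T := S.filter (fun u => v m ≤ v u) with hT
  have hTne : T.Nonempty := ⟨m, by simp [hT, hmS]⟩
  set x := T.min' hTne with hx
  have hxT : x ∈ T := T.min'_mem hTne
  have hxS : x ∈ S := (Finset.mem_filter.mp hxT).1
  have hvmx : v m ≤ v x := (Finset.mem_filter.mp hxT).2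
  have hmax : ∀ k ∈ S, v k ≤ v x := fun k hk => (hm k hk).trans hvmx
  have hxmin : ∀ k ∈ S, k < x → v k < v x := by
    intro k hk hkx
    rcases lt_or_ge (v k) (v x) with h' | h'
    · exact h'
    · exfalso
      have hkT : k ∈ T := Finset.mem_filter.mpr ⟨hk, le_trans hvmx h'⟩
      have := T.min'_le k hkT
      omega
  have hy1S : y₁ ∈ S := by simp [hS, Finset.mem_Icc]; omega
  have hy2S : y₂ ∈ S := by simp [hS, Finset.mem_Icc]; omega
  have hxmem := Finset.mem_Icc.mp hxS
  have key12 : v y₁ + h ≤ v x ∧ v y₂ + h ≤ v x := by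
    rcases le_or_gt β₁ y₂ with hB | hB
    · have hb : v y₁ + h ≤ v x :=
        hvβ₁.trans (hmax β₁ (by simp [hS, Finset.mem_Icc]; omega))
      rcases le_or_gt y₁ α₂ with hA | hA
      · exact ⟨hb, hvα₂.trans (hmax α₂ (by simp [hS, Finset.mem_Icc]; omega))⟩
      · have h21 := hL2 y₁ (by omega) (by omega)
        exact ⟨hb, by linarith⟩
    · have h12 : v y₁ ≤ v y₂ := hR1 y₂ hlt (by omega)
      rcases le_or_gt y₁ α₂ with hA | hA
      · have h2x : v y₂ + h ≤ v x :=
          hvα₂.trans (hmax α₂ (by simp [hS, Finset.mem_Icc]; omega))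
        exact ⟨by linarith, h2x⟩
      · have h21 := hL2 y₁ (by omega) (by omega)
        exfalso; linarith
  obtain ⟨k1, k2⟩ := key12
  have hvy1x : v y₁ < v x := by linarith
  have hvy2x : v y₂ < v x := by linarith
  have hx1 : y₁ < x := by
    rcases lt_or_eq_of_le hxmem.1 with h' | h'
    · exact h'
    · exfalso; rw [← h'] at hvy1x; exact lt_irrefl _ hvy1x
  have hx2 : x < y₂ := by
    rcases lt_or_eq_of_le hxmem.2 with h' | h'
    · exact h'
    · exfalso; rw [h'] at hvy2x; exact lt_irrefl _ hvy2x
  refine ⟨x, hx1, hx2, y₁, y₂, hx1, hx2, ?_, ?_, by simp; linarith, by simp; linarith⟩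
  · intro k hk1 hk2
    have : v k < v x := hxmin k (by simp [hS, Finset.mem_Icc]; omega) hk2
    simp; linarith
  · intro k hk1 hk2
    have : v k ≤ v x := hmax k (by simp [hS, Finset.mem_Icc]; omega)
    simp; linarith

/-- Between any two left `h`-minima of `v` there is a left `h`-maximum, and between any two
left `h`-maxima there is a left `h`-minimum: left `h`-minima and maxima alternate. -/
theorem leftHMin_leftHMax_alternate
    (v : ℤ → ℝ)
    (hinf_top : ∀ M : ℝ, ∃ᶠ t in Filter.atTop, v t < M)
    (hsup_top : ∀ M : ℝ, ∃ᶠ t in Filter.atTop, M < v t)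
    (hinf_bot : ∀ M : ℝ, ∃ᶠ t in Filter.atBot, v t < M)
    (hsup_bot : ∀ M : ℝ, ∃ᶠ t in Filter.atBot, M < v t)
    (h : ℝ) (hh : 0 < h) :
    (∀ y₁ y₂ : ℤ, IsLeftHMin v h y₁ → IsLeftHMin v h y₂ → y₁ < y₂ →
      ∃ x : ℤ, y₁ < x ∧ x < y₂ ∧ IsLeftHMax v h x) ∧
    (∀ y₁ y₂ : ℤ, IsLeftHMax v h y₁ → IsLeftHMax v h y₂ → y₁ < y₂ →
      ∃ x : ℤ, y₁ < x ∧ x < y₂ ∧ IsLeftHMin v h x) := by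
  constructor
  · intro y₁ y₂ h1 h2 hlt
    exact leftHMin_key v h hh y₁ y₂ h1 h2 hlt
  · intro y₁ y₂ h1 h2 hlt
    obtain ⟨x, hx1, hx2, hxmax⟩ := leftHMin_key (fun t => -v t) h hh y₁ y₂ h1 h2 hlt
    refine ⟨x, hx1, hx2, ?_⟩
    have heq : (fun t => -(-v t)) = v := by funext t; ring
    unfold IsLeftHMax at hxmax
    rwa [show (fun t => -(fun t => -v t) t) = v from heq] at hxmax
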